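/- arXiv:2302.09795 — 5 statements merged into one kernel-verified Lean document; each statement's English description precedes it below -/
import Mathlib

section
/- Let A be a real d' × d matrix with full column rank, fix j ∈ {1,…,d} and real numbers α and β. Let z₁,…,z_N ∈ ℝ^d be points whose empirical covariance matrix Σ̂ = (1/N) Σᵢ (zᵢ − z̄)(zᵢ − z̄)ᵀ (with z̄ = (1/N) Σᵢ zᵢ) is invertible. Define uᵢ = A zᵢ ∈ ℝ^{d'} and yᵢ = α + β [zᵢ]_j. Then every pair (a, p) ∈ ℝ × ℝ^{d'} minimizing the least-squares objective Σᵢ (yᵢ − a − ⟨p, uᵢ⟩)² satisfies Aᵀ p = β e_j, where e_j is the j-th canonical basis vector of ℝ^d; moreover a = α for every such minimizer. -/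
open Matrix

/-- Noiseless finite-sample style-factor recovery: with entangled
representations `u i = A z i` and annotations `y i = α + β [z i]_j`, any minimizer
`(a, p)` of the least-squares objective satisfies `Aᵀ p = β e_j` and `a = α`. -/
theorem stmt1 (d' d N : ℕ) (hN : 0 < N)
    (A : Matrix (Fin d') (Fin d) ℝ)
    (hA : LinearIndependent ℝ (fun j : Fin d => fun i : Fin d' => A i j))
    (j : Fin d) (α β : ℝ)
    (z : Fin N → Fin d → ℝ)
    (zbar : Fin d → ℝ) (hzbar : zbar = fun k => (∑ i, z i k) / N)
    (Shat : Matrix (Fin d) (Fin d) ℝ)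
    (hShat : Shat = Matrix.of fun k l => (∑ i, (z i k - zbar k) * (z i l - zbar l)) / N)
    (hinv : IsUnit Shat)
    (u : Fin N → Fin d' → ℝ) (hu : ∀ i, u i = A *ᵥ z i)
    (y : Fin N → ℝ) (hy : ∀ i, y i = α + β * z i j)
    (a : ℝ) (p : Fin d' → ℝ)
    (hmin : ∀ (a' : ℝ) (p' : Fin d' → ℝ),
      ∑ i, (y i - a - p ⬝ᵥ u i) ^ 2 ≤ ∑ i, (y i - a' - p' ⬝ᵥ u i) ^ 2) :
    Aᵀ *ᵥ p = β • (Pi.single j 1 : Fin d → ℝ) ∧ a = α := by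
  have hNR : (N : ℝ) ≠ 0 := Nat.cast_ne_zero.mpr hN.ne'
  -- A has injective mulVec
  have hAinj : Function.Injective A.mulVec := by
    rw [Matrix.mulVec_injective_iff]
    exact hA
  -- Aᵀ * A is invertible
  have hG : IsUnit (Aᵀ * A) := by
    rw [← Matrix.mulVec_injective_iff_isUnit]
    have hker : ∀ x : Fin d → ℝ, (Aᵀ * A) *ᵥ x = 0 → x = 0 := by
      intro x hx
      have h1 : x ⬝ᵥ ((Aᵀ * A) *ᵥ x) = 0 := by rw [hx]; simp
      have h2 : (A *ᵥ x) ⬝ᵥ (A *ᵥ x) = 0 :=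
        calc (A *ᵥ x) ⬝ᵥ (A *ᵥ x) = (x ᵥ* Aᵀ) ⬝ᵥ (A *ᵥ x) := by
              rw [Matrix.vecMul_transpose]
          _ = x ⬝ᵥ (Aᵀ *ᵥ (A *ᵥ x)) := (Matrix.dotProduct_mulVec _ _ _).symm
          _ = x ⬝ᵥ ((Aᵀ * A) *ᵥ x) := by rw [Matrix.mulVec_mulVec]
          _ = 0 := h1
      have h3 : A *ᵥ x = 0 := by
        funext i
        have hnn : ∀ i ∈ Finset.univ, (0:ℝ) ≤ (A *ᵥ x) i * (A *ᵥ x) i :=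
          fun i _ => mul_self_nonneg _
        have h4 := (Finset.sum_eq_zero_iff_of_nonneg hnn).mp h2 i (Finset.mem_univ i)
        simpa using mul_self_eq_zero.mp h4
      have h5 : A *ᵥ x = A *ᵥ 0 := by simpa using h3
      simpa using hAinj h5
    intro x y hxy
    have : (Aᵀ * A) *ᵥ (x - y) = 0 := by
      rw [Matrix.mulVec_sub, hxy, sub_self]
    exact sub_eq_zero.mp (hker _ this)
  have hGdet : IsUnit (Aᵀ * A).det := (Matrix.isUnit_iff_isUnit_det _).mp hG
  -- the candidate minimizer
  set e : Fin d → ℝ := β • (Pi.single j 1 : Fin d → ℝ) with he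
  set pstar : Fin d' → ℝ := A *ᵥ ((Aᵀ * A)⁻¹ *ᵥ e) with hpstar
  have hATpstar : Aᵀ *ᵥ pstar = e := by
    rw [hpstar, Matrix.mulVec_mulVec, Matrix.mulVec_mulVec,
      Matrix.mul_nonsing_inv _ hGdet, Matrix.one_mulVec]
  have hedot : ∀ v : Fin d → ℝ, e ⬝ᵥ v = β * v j := by
    intro v
    simp [he, dotProduct, Pi.single_apply, Finset.sum_ite_eq,
      Finset.mul_sum, mul_assoc]
  -- objective at (α, pstar) is zero
  have hzero : ∑ i, (y i - α - pstar ⬝ᵥ u i) ^ 2 = 0 := by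
    apply Finset.sum_eq_zero
    intro i _
    have hps : pstar ⬝ᵥ u i = β * z i j := by
      rw [hu, Matrix.dotProduct_mulVec, ← Matrix.mulVec_transpose, hATpstar, hedot]
    rw [hy, hps]
    ring
  have hle : ∑ i, (y i - a - p ⬝ᵥ u i) ^ 2 ≤ 0 := hzero ▸ hmin α pstar
  -- so each residual vanishes
  have hres : ∀ i, y i - a - p ⬝ᵥ u i = 0 := by
    intro i
    have hnn : ∀ i ∈ Finset.univ, (0:ℝ) ≤ (y i - a - p ⬝ᵥ u i) ^ 2 :=
      fun i _ => sq_nonneg _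
    have hsum0 : ∑ i, (y i - a - p ⬝ᵥ u i) ^ 2 = 0 :=
      le_antisymm hle (Finset.sum_nonneg hnn)
    exact pow_eq_zero_iff (two_ne_zero) |>.mp
      ((Finset.sum_eq_zero_iff_of_nonneg hnn).mp hsum0 i (Finset.mem_univ i))
  -- set w = Aᵀ p - β e_j, c = α - a
  set w : Fin d → ℝ := Aᵀ *ᵥ p - e with hw
  set c : ℝ := α - a with hc
  have hwz : ∀ i, w ⬝ᵥ z i = c := by
    intro i
    have h0 := hres i
    have hpu : p ⬝ᵥ u i = (Aᵀ *ᵥ p) ⬝ᵥ z i := by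
      rw [hu, Matrix.dotProduct_mulVec, ← Matrix.mulVec_transpose]
    rw [hy, hpu] at h0
    have hsplit : w ⬝ᵥ z i = (Aᵀ *ᵥ p) ⬝ᵥ z i - β * z i j := by
      rw [hw, sub_dotProduct, hedot]
    rw [hsplit, hc]
    linarith
  have hwzbar : w ⬝ᵥ zbar = c := by
    calc w ⬝ᵥ zbar = ∑ k, (∑ i, w k * z i k) / N := by
          simp only [hzbar, dotProduct, ← Finset.mul_sum, mul_div_assoc]
      _ = (∑ i, ∑ k, w k * z i k) / N := by rw [← Finset.sum_div, Finset.sum_comm]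
      _ = (∑ _i : Fin N, c) / N := by
          congr 1
          exact Finset.sum_congr rfl fun i _ => hwz i
      _ = c := by
          rw [Finset.sum_const, Finset.card_univ, Fintype.card_fin, nsmul_eq_mul,
            mul_comm, mul_div_assoc, div_self hNR, mul_one]
  have hinner : ∀ i, ∑ l, (z i l - zbar l) * w l = 0 := by
    intro i
    have hsub : ∑ l, (z i l - zbar l) * w l = w ⬝ᵥ z i - w ⬝ᵥ zbar := by
      simp [dotProduct, sub_mul, Finset.sum_sub_distrib, mul_comm]
    rw [hsub, hwz, hwzbar, sub_self]
  have hSw : Shat *ᵥ w = 0 := by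
    funext k
    simp only [hShat, Matrix.mulVec, dotProduct, Matrix.of_apply, Pi.zero_apply]
    calc ∑ l, (∑ i, (z i k - zbar k) * (z i l - zbar l)) / N * w l
        = ∑ l, (∑ i, (z i k - zbar k) * (z i l - zbar l) * w l) / N := by
          refine Finset.sum_congr rfl fun l _ => ?_
          rw [div_mul_eq_mul_div, Finset.sum_mul]
      _ = (∑ i, ∑ l, (z i k - zbar k) * (z i l - zbar l) * w l) / N := by
          rw [← Finset.sum_div, Finset.sum_comm]
      _ = 0 := by
          rw [Finset.sum_eq_zero, zero_div]
          intro i _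
          calc ∑ l, (z i k - zbar k) * (z i l - zbar l) * w l
              = (z i k - zbar k) * ∑ l, (z i l - zbar l) * w l := by
                rw [Finset.mul_sum]
                exact Finset.sum_congr rfl fun l _ => by ring
            _ = 0 := by rw [hinner, mul_zero]
  have hSinj : Function.Injective Shat.mulVec :=
    Matrix.mulVec_injective_iff_isUnit.mpr hinv
  have hw0 : w = 0 := by
    have : Shat *ᵥ w = Shat *ᵥ 0 := by simpa using hSw
    simpa using hSinj this
  have hmain : Aᵀ *ᵥ p = e := by
    have := sub_eq_zero.mp (hw ▸ hw0)
    exact this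
  refine ⟨hmain, ?_⟩
  have hc0 : c = 0 := by
    have := hwz ⟨0, hN⟩
    rw [hw0] at this
    simpa using this.symm
  rw [hc] at hc0
  linarith
end

section
/- Let A be a real d' × d matrix with full column rank, let Σ be a symmetric positive definite real d × d matrix, let m ≤ d, and let H⊥ be a real d' × d' matrix that is symmetric and idempotent (H⊥ᵀ = H⊥ and H⊥² = H⊥) whose column space equals the orthogonal complement in ℝ^{d'} of the span of the first m columns of A. Then the matrix H⊥ A Σ Aᵀ H⊥ has rank exactly d − m. -/
open Matrix Module LinearMap
open scoped MatrixOrder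

/-!
Let `A₁` be the first `m` columns of `A`. Since `H` is symmetric with range `(range A₁)ᗮ`, its
kernel is `range A₁`, which lies in `range A`; rank–nullity for `H` restricted to `range A` then
gives `rank (H A) = d - m`. Finally `H A S Aᵀ H = (H A) S (H A)ᵀ` has the rank of `H A`, because
`S = C * C` for the invertible symmetric square root `C` of `S`.
-/

theorem LinearMap.finrank_map_add_finrank_ker_of_ker_le {K V W : Type*} [DivisionRing K]
    [AddCommGroup V] [Module K V] [AddCommGroup W] [Module K W] [FiniteDimensional K V]
    (f : V →ₗ[K] W) {p : Submodule K V} (h : ker f ≤ p) :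
    finrank K (p.map f) + finrank K (ker f) = finrank K p := by
  have := (f.domRestrict p).finrank_range_add_finrank_ker
  rwa [range_domRestrict, ker_domRestrict, (Submodule.comapSubtypeEquivOfLe h).finrank_eq] at this

namespace Matrix

variable {m n K : Type*} [Fintype m] [Fintype n]

theorem rank_eq_card_of_linearIndependent_col [Field K] {A : Matrix m n K}
    (h : LinearIndependent K A.col) : A.rank = Fintype.card n := by
  rw [← rank_transpose]
  exact h.rank_matrix

theorem ker_mulVecLin_eq_range_transpose_of_isSymm [Field K] [DecidableEq n] {H : Matrix n n K}
    (hH : H.IsSymm) {B : Matrix m n K} (h : range H.mulVecLin = ker B.mulVecLin) :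
    ker H.mulVecLin = range Bᵀ.mulVecLin := by
  have hBH : B * H = 0 := toLin'.injective <| by
    rw [toLin'_mul, map_zero, toLin'_apply', toLin'_apply', ← range_le_ker_iff, h]
  have hHB : H * Bᵀ = 0 := by
    rw [← hH.eq, ← transpose_mul, hBH, transpose_zero]
  refine (Submodule.eq_of_le_of_finrank_eq ?_ ?_).symm
  · exact range_le_ker_iff.mpr (by rw [← mulVecLin_mul, hHB, mulVecLin_zero])
  · have h₁ := H.mulVecLin.finrank_range_add_finrank_ker
    have h₂ := B.mulVecLin.finrank_range_add_finrank_ker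
    have h₃ : finrank K (range Bᵀ.mulVecLin) = finrank K (range B.mulVecLin) := B.rank_transpose
    rw [h] at h₁
    omega

theorem rank_mul_add_finrank_ker_of_ker_le_range [Field K] {H : Matrix m m K} {A : Matrix m n K}
    (h : ker H.mulVecLin ≤ range A.mulVecLin) :
    (H * A).rank + finrank K (ker H.mulVecLin) = A.rank := by
  rw [rank, rank, mulVecLin_mul, range_comp]
  exact H.mulVecLin.finrank_map_add_finrank_ker_of_ker_le h

theorem rank_mul_mul_transpose_of_posDef [DecidableEq n] {B : Matrix m n ℝ} {S : Matrix n n ℝ}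
    (hS : S.PosDef) :
    (B * S * Bᵀ).rank = B.rank := by
  set C := CFC.sqrt S
  have hCt : Cᵀ = C := by
    rw [← conjTranspose_eq_transpose_of_trivial]
    exact (CFC.sqrt_nonneg S).posSemidef.1
  have hCC : C * C = S := CFC.sqrt_mul_sqrt_self S hS.posSemidef.nonneg
  have hC : IsUnit C.det := by
    have : IsUnit (C * C) := hCC ▸ hS.isUnit
    exact (isUnit_iff_isUnit_det C).mp (isUnit_of_mul_isUnit_left this)
  have : B * S * Bᵀ = (B * C) * (B * C)ᵀ := by
    rw [transpose_mul, hCt, ← hCC]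
    simp only [Matrix.mul_assoc]
  rw [this, rank_self_mul_transpose, rank_mul_eq_left_of_isUnit_det _ _ hC]

end Matrix

theorem stmt5_general (d' d m : ℕ) (hm : m ≤ d)
    (A : Matrix (Fin d') (Fin d) ℝ)
    (hA : LinearIndependent ℝ (fun j : Fin d => fun i : Fin d' => A i j))
    (S : Matrix (Fin d) (Fin d) ℝ) (hS : S.PosDef)
    (H : Matrix (Fin d') (Fin d') ℝ) (hsymm : H.IsSymm)
    (hrange : ∀ x : Fin d' → ℝ,
      (∃ y : Fin d' → ℝ, H *ᵥ y = x) ↔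
        ∀ j : Fin m, x ⬝ᵥ (fun i : Fin d' => A i (Fin.castLE hm j)) = 0) :
    (H * A * S * Aᵀ * H).rank = d - m := by
  set A₁ : Matrix (Fin d') (Fin m) ℝ := of fun i j => A i (Fin.castLE hm j)
  have hrange_eq_ker : range H.mulVecLin = ker A₁ᵀ.mulVecLin := by
    ext x
    refine (hrange x).trans ?_
    rw [mem_ker, mulVecLin_apply, funext_iff]
    simp only [dotProduct_comm x]
    rfl
  have hker : ker H.mulVecLin = range A₁.mulVecLin :=
    ker_mulVecLin_eq_range_transpose_of_isSymm hsymm hrange_eq_ker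
  have hA₁ : range A₁.mulVecLin ≤ range A.mulVecLin := by
    rw [range_mulVecLin, range_mulVecLin]
    exact Submodule.span_mono (Set.range_comp_subset_range (Fin.castLE hm) A.col)
  have hrankA : A.rank = d := by simpa using rank_eq_card_of_linearIndependent_col hA
  have hrankA₁ : A₁.rank = m := by
    simpa using rank_eq_card_of_linearIndependent_col (A := A₁)
      (hA.comp _ (Fin.castLE_injective hm))
  have hHA := rank_mul_add_finrank_ker_of_ker_le_range (hker.trans_le hA₁)
  rw [hker, ← Matrix.rank, hrankA, hrankA₁] at hHA
  have hfact : H * A * S * Aᵀ * H = (H * A) * S * (H * A)ᵀ := by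
    rw [transpose_mul, hsymm.eq]; simp only [Matrix.mul_assoc]
  rw [hfact, rank_mul_mul_transpose_of_posDef hS]
  omega

/-- If `A` has full column rank, `S` is symmetric positive definite, and
`H` is the orthogonal projector onto the orthocomplement of the span of the first `m`
columns of `A`, then `rank (H A S Aᵀ H) = d - m`. -/
theorem stmt5 (d' d m : ℕ) (hm : m ≤ d)
    (A : Matrix (Fin d') (Fin d) ℝ)
    (hA : LinearIndependent ℝ (fun j : Fin d => fun i : Fin d' => A i j))
    (S : Matrix (Fin d) (Fin d) ℝ) (hS : S.PosDef)
    (H : Matrix (Fin d') (Fin d') ℝ) (hsymm : H.IsSymm) (hidem : H * H = H)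
    (hrange : ∀ x : Fin d' → ℝ,
      (∃ y : Fin d' → ℝ, H *ᵥ y = x) ↔
        ∀ j : Fin m, x ⬝ᵥ (fun i : Fin d' => A i (Fin.castLE hm j)) = 0) :
    (H * A * S * Aᵀ * H).rank = d - m :=
  stmt5_general d' d m hm A hA S hS H hsymm hrange
end

section
/- Let A be a real d' × d matrix with full column rank, let Σ be a symmetric positive definite real d × d matrix, let m ≤ d, and let H⊥ be a real d' × d' symmetric idempotent matrix whose column space equals the orthogonal complement in ℝ^{d'} of the span of the first m columns of A. Then the null space of H⊥ A Σ Aᵀ H⊥ equals the sum of the span of the first m columns of A and the orthogonal complement of the column space of A; that is, H⊥ A Σ Aᵀ H⊥ x = 0 if and only if x ∈ span{A_{·,1},…,A_{·,m}} + (col A)^⊥. -/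
/-!
`H` is the orthogonal projector onto `Wᗮ`, where `W` is spanned by the first `m` columns of `A`,
so `ker H = W` (using `Wᗮᗮ = W`) and `H` fixes every vector orthogonal to `W`. With `M = H A`
the matrix is `M S Mᵀ`, and positive definiteness of `S` gives `ker (M S Mᵀ) = ker Mᵀ`, i.e.
`x` is in the kernel iff `H x ⊥ col A`. Then `x = (x - H x) + H x` is the required splitting;
conversely, if `x = u + v` with `u ∈ W` and `v ⊥ col A ⊇ W`, then `H x = v` and `Aᵀ v = 0`.
-/

open Matrix

namespace Matrix

variable {K n ι : Type*} [Field K] [Fintype n]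

theorem mem_of_forall_dotProduct_eq_zero {W : Submodule K (n → K)} {x : n → K}
    (h : ∀ y, (∀ w ∈ W, w ⬝ᵥ y = 0) → x ⬝ᵥ y = 0) : x ∈ W := by
  let B : LinearMap.BilinForm K (n → K) := dotProductBilin K K
  have hB : B.Nondegenerate :=
    ⟨fun v hv => dotProduct_eq_zero v hv,
      fun w hw => dotProduct_eq_zero w fun v => (dotProduct_comm w v).trans (hw v)⟩
  have hBrefl : B.IsRefl := fun v w hvw => (dotProduct_comm w v).trans hvw
  rw [← LinearMap.BilinForm.orthogonal_orthogonal hB hBrefl W]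
  exact fun y hy => (dotProduct_comm y x).trans (h y hy)

theorem IsSymm.dotProduct_mulVec_comm {H : Matrix n n K} (hH : H.IsSymm) (x y : n → K) :
    x ⬝ᵥ H *ᵥ y = H *ᵥ x ⬝ᵥ y := by
  rw [dotProduct_mulVec, ← mulVec_transpose, hH.eq]

section Projection

variable {H : Matrix n n K} {a : ι → n → K}

theorem mulVec_eq_self_of_forall_dotProduct_eq_zero
    (hrange : ∀ x, (∃ y, H *ᵥ y = x) ↔ ∀ j, x ⬝ᵥ a j = 0) (hidem : H * H = H) {v : n → K}
    (hv : ∀ j, v ⬝ᵥ a j = 0) : H *ᵥ v = v := by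
  obtain ⟨y, rfl⟩ := (hrange v).2 hv
  rw [mulVec_mulVec, hidem]

theorem mulVec_eq_zero_iff_mem_span
    (hrange : ∀ x, (∃ y, H *ᵥ y = x) ↔ ∀ j, x ⬝ᵥ a j = 0) (hsymm : H.IsSymm) {x : n → K} :
    H *ᵥ x = 0 ↔ x ∈ Submodule.span K (Set.range a) := by
  constructor
  · intro hx
    refine mem_of_forall_dotProduct_eq_zero fun y hy => ?_
    obtain ⟨z, rfl⟩ := (hrange y).2 fun j => by
      rw [dotProduct_comm]; exact hy _ (Submodule.subset_span ⟨j, rfl⟩)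
    rw [hsymm.dotProduct_mulVec_comm, hx, zero_dotProduct]
  · intro hx
    suffices Submodule.span K (Set.range a) ≤ LinearMap.ker H.mulVecLin from this hx
    rw [Submodule.span_le]
    rintro _ ⟨j, rfl⟩
    refine dotProduct_eq_zero _ fun y => ?_
    rw [mulVecLin_apply, dotProduct_comm, hsymm.dotProduct_mulVec_comm]
    exact (hrange _).1 ⟨y, rfl⟩ j

end Projection

theorem PosDef.mul_mul_conjTranspose_mulVec_eq_zero_iff {R m : Type*} [CommRing R]
    [PartialOrder R] [StarRing R] [Fintype m] {S : Matrix n n R} (hS : S.PosDef)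
    (M : Matrix m n R) (x : m → R) :
    (M * S * Mᴴ) *ᵥ x = 0 ↔ Mᴴ *ᵥ x = 0 := by
  refine ⟨fun hx => ?_, fun hx => by rw [← mulVec_mulVec, hx, mulVec_zero]⟩
  by_contra hne
  have hquad : star (Mᴴ *ᵥ x) ⬝ᵥ S *ᵥ (Mᴴ *ᵥ x) = star x ⬝ᵥ (M * S * Mᴴ) *ᵥ x := by
    rw [star_mulVec, conjTranspose_conjTranspose, ← dotProduct_mulVec, ← mulVec_mulVec,
      ← mulVec_mulVec, mulVec_mulVec]
  exact (hS.dotProduct_mulVec_pos hne).ne' (hquad.trans (by rw [hx, dotProduct_zero]))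

theorem forall_dotProduct_mulVec_eq_zero_iff {R m : Type*} [CommSemiring R] [Fintype m]
    (A : Matrix n m R) (v : n → R) : (∀ c, v ⬝ᵥ A *ᵥ c = 0) ↔ Aᵀ *ᵥ v = 0 := by
  simp_rw [dotProduct_mulVec, mulVec_transpose]
  exact dotProduct_eq_zero_iff

end Matrix

theorem stmt6_general (d' d m : ℕ) (hm : m ≤ d)
    (A : Matrix (Fin d') (Fin d) ℝ)
    (S : Matrix (Fin d) (Fin d) ℝ) (hS : S.PosDef)
    (H : Matrix (Fin d') (Fin d') ℝ) (hsymm : H.IsSymm) (hidem : H * H = H)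
    (hrange : ∀ x : Fin d' → ℝ,
      (∃ y : Fin d' → ℝ, H *ᵥ y = x) ↔
        ∀ j : Fin m, x ⬝ᵥ (fun i : Fin d' => A i (Fin.castLE hm j)) = 0) :
    ∀ x : Fin d' → ℝ,
      (H * A * S * Aᵀ * H) *ᵥ x = 0 ↔
        ∃ u v : Fin d' → ℝ,
          u ∈ Submodule.span ℝ
            (Set.range fun j : Fin m => fun i : Fin d' => A i (Fin.castLE hm j)) ∧
          (∀ c : Fin d → ℝ, v ⬝ᵥ (A *ᵥ c) = 0) ∧
          x = u + v := by
  intro x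
  have hker : (H * A * S * Aᵀ * H) *ᵥ x = 0 ↔ Aᵀ *ᵥ (H *ᵥ x) = 0 := by
    have hconj : (H * A)ᴴ = Aᵀ * H := by
      rw [conjTranspose_eq_transpose_of_trivial, transpose_mul, hsymm.eq]
    rw [Matrix.mul_assoc _ Aᵀ H, ← hconj, hS.mul_mul_conjTranspose_mulVec_eq_zero_iff, hconj,
      ← mulVec_mulVec]
  rw [hker]
  constructor
  · intro hHx
    refine ⟨x - H *ᵥ x, H *ᵥ x, (mulVec_eq_zero_iff_mem_span hrange hsymm).1 ?_,
      (forall_dotProduct_mulVec_eq_zero_iff A _).2 hHx, (sub_add_cancel x _).symm⟩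
    rw [mulVec_sub, mulVec_mulVec, hidem, sub_self]
  · rintro ⟨u, v, hu, hv, rfl⟩
    have hHv : H *ᵥ v = v := mulVec_eq_self_of_forall_dotProduct_eq_zero hrange hidem
      fun j => by
        have hcol := hv (Pi.single (Fin.castLE hm j) 1)
        rwa [mulVec_single_one] at hcol
    rw [mulVec_add, (mulVec_eq_zero_iff_mem_span hrange hsymm).2 hu, hHv, zero_add]
    exact (forall_dotProduct_mulVec_eq_zero_iff A v).1 hv

/-- Under the setup of Statement 5, the null space of `H A S Aᵀ H`
is the sum of the span of the first `m` columns of `A` and the orthogonal complement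
of the column space of `A`. -/
theorem stmt6 (d' d m : ℕ) (hm : m ≤ d)
    (A : Matrix (Fin d') (Fin d) ℝ)
    (hA : LinearIndependent ℝ (fun j : Fin d => fun i : Fin d' => A i j))
    (S : Matrix (Fin d) (Fin d) ℝ) (hS : S.PosDef)
    (H : Matrix (Fin d') (Fin d') ℝ) (hsymm : H.IsSymm) (hidem : H * H = H)
    (hrange : ∀ x : Fin d' → ℝ,
      (∃ y : Fin d' → ℝ, H *ᵥ y = x) ↔
        ∀ j : Fin m, x ⬝ᵥ (fun i : Fin d' => A i (Fin.castLE hm j)) = 0) :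
    ∀ x : Fin d' → ℝ,
      (H * A * S * Aᵀ * H) *ᵥ x = 0 ↔
        ∃ u v : Fin d' → ℝ,
          u ∈ Submodule.span ℝ
            (Set.range fun j : Fin m => fun i : Fin d' => A i (Fin.castLE hm j)) ∧
          (∀ c : Fin d → ℝ, v ⬝ᵥ (A *ᵥ c) = 0) ∧
          x = u + v :=
  stmt6_general d' d m hm A S hS H hsymm hidem hrange
end

section
/- Let A be a real d' × d matrix with full column rank and let m ≤ d. Write F_S = {1,…,m} and F_C = {m+1,…,d}. Let Q be a real (d − m) × d' matrix with orthonormal rows (Q Qᵀ = I) whose row space equals col(A) ∩ (span{A_{·,j} : j ∈ F_S})^⊥. Then: (1) Q A_{·,j} = 0 for every j ∈ F_S, and (2) the (d − m) × (d − m) matrix [Q A]_{·,F_C} formed by the columns of Q A indexed by F_C is invertible. -/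
/-!
Every row of `Q` lies in its own row space, hence is orthogonal to the style columns. For
invertibility, let `[Q A]_{·,F_C} v = 0` and `x = A_{·,F_C} v`. Then `x ∈ col(A)` and `Q x = 0`, so
`x` is orthogonal to `row(Q) = col(A) ∩ Sᗮ`, where `S` is spanned by the style columns. Since
`col(A) = S ⊕ (col(A) ∩ Sᗮ)`, this forces `x ∈ S`; but `x` is also in the span of the content
columns, and the columns of `A` are linearly independent, so `x = 0` and then `v = 0`.
-/

open Matrix

namespace Submodule

variable {𝕜 E : Type*} [RCLike 𝕜] [NormedAddCommGroup E] [InnerProductSpace 𝕜 E]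

theorem mem_of_mem_orthogonal_orthogonal_inf {K V : Submodule 𝕜 E} [K.HasOrthogonalProjection]
    (hKV : K ≤ V) {x : E} (hxV : x ∈ V) (hx : x ∈ (Kᗮ ⊓ V)ᗮ) : x ∈ K := by
  rw [← sup_orthogonal_inf_of_hasOrthogonalProjection hKV, mem_sup] at hxV
  obtain ⟨y, hy, z, hz, rfl⟩ := hxV
  have hzz : inner 𝕜 z z = 0 := by
    have hzx : inner 𝕜 z (y + z) = 0 := inner_right_of_mem_orthogonal hz hx
    rwa [inner_add_right, inner_left_of_mem_orthogonal hy hz.1, zero_add] at hzx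
  rwa [inner_self_eq_zero.mp hzz, add_zero]

theorem mem_of_forall_dotProduct_eq_zero {n : Type*} [Fintype n] {K V : Submodule ℝ (n → ℝ)}
    (hKV : K ≤ V) {x : n → ℝ} (hxV : x ∈ V)
    (hx : ∀ w ∈ V, (∀ k ∈ K, k ⬝ᵥ w = 0) → w ⬝ᵥ x = 0) : x ∈ K := by
  let e := (WithLp.linearEquiv 2 ℝ (n → ℝ)).toLinearMap
  refine mem_of_mem_orthogonal_orthogonal_inf (K := K.comap e) (V := V.comap e)
    (x := WithLp.toLp 2 x) (comap_mono hKV) hxV ?_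
  rw [mem_orthogonal]
  rintro ⟨w⟩ ⟨hwK, hwV⟩
  rw [EuclideanSpace.inner_toLp_toLp, star_trivial, dotProduct_comm]
  refine hx _ hwV fun k hk => ?_
  rw [dotProduct_comm]
  simpa [EuclideanSpace.inner_toLp_toLp, e] using (mem_orthogonal _ _).mp hwK (WithLp.toLp 2 k) hk

end Submodule

namespace Matrix

variable {R n ι : Type*} [CommRing R] [Fintype ι]

theorem exists_mulVec_eq_iff_mem_span_range_col (A : Matrix n ι R) (x : n → R) :
    (∃ c, A *ᵥ c = x) ↔ x ∈ Submodule.span R (Set.range A.col) := by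
  rw [← range_mulVecLin, LinearMap.mem_range]
  rfl

theorem mulVec_eq_zero_of_forall_transpose_mulVec_dotProduct_eq_zero {μ : Type*} [Fintype n]
    [Fintype μ] [LinearOrder R] [IsStrictOrderedRing R] {Q : Matrix μ n R} {v : n → R}
    (h : ∀ y, (Qᵀ *ᵥ y) ⬝ᵥ v = 0) : Q *ᵥ v = 0 := by
  rw [← dotProduct_self_eq_zero, ← h (Q *ᵥ v), mulVec_transpose, dotProduct_mulVec]

theorem isUnit_submatrix_mul_of_linearIndependent {μ κ : Type*} [Fintype n] [Fintype μ]
    [DecidableEq μ] {A : Matrix n ι ℝ} {Q : Matrix μ n ℝ} {σ : κ → ι} {τ : μ → ι}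
    (hA : LinearIndependent ℝ A.col) (hτ : Function.Injective τ)
    (hστ : Disjoint (Set.range σ) (Set.range τ))
    (hQ : ∀ x, (∃ c, A *ᵥ c = x) → (∀ j, x ⬝ᵥ A.col (σ j) = 0) → ∃ y, Qᵀ *ᵥ y = x) :
    IsUnit ((Q * A).submatrix id τ) := by
  rw [← mulVec_injective_iff_isUnit, ← coe_mulVecLin, ← LinearMap.ker_eq_bot,
    ker_mulVecLin_eq_bot_iff]
  intro v hv
  set x := A.submatrix id τ *ᵥ v
  have hQx : Q *ᵥ x = 0 := by
    rwa [mulVec_mulVec, ← submatrix_id_id Q, ← submatrix_mul _ _ _ _ _ Function.bijective_id]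
  have hxτ : x ∈ Submodule.span ℝ (A.col '' Set.range τ) := by
    have hx := (exists_mulVec_eq_iff_mem_span_range_col (A.submatrix id τ) x).mp ⟨v, rfl⟩
    rwa [show (A.submatrix id τ).col = A.col ∘ τ from rfl, Set.range_comp] at hx
  have hxσ : x ∈ Submodule.span ℝ (A.col '' Set.range σ) := by
    refine Submodule.mem_of_forall_dotProduct_eq_zero
      (Submodule.span_mono (Set.image_subset_range _ _))
      (Submodule.span_mono (Set.image_subset_range _ _) hxτ) fun w hwV hwσ => ?_
    obtain ⟨y, rfl⟩ := hQ w ((exists_mulVec_eq_iff_mem_span_range_col A w).mpr hwV) fun j => by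
      rw [dotProduct_comm]
      exact hwσ _ (Submodule.subset_span ⟨σ j, Set.mem_range_self j, rfl⟩)
    rw [mulVec_transpose, ← dotProduct_mulVec, hQx, dotProduct_zero]
  have hx : x = 0 := Submodule.disjoint_def.mp (hA.disjoint_span_image hστ) x hxσ hxτ
  exact mulVec_injective_iff.mpr (hA.comp τ hτ) (hx.trans (mulVec_zero _).symm)

end Matrix

theorem stmt7_general (d' d m : ℕ) (hm : m ≤ d)
    (A : Matrix (Fin d') (Fin d) ℝ)
    (hA : LinearIndependent ℝ (fun j : Fin d => fun i : Fin d' => A i j))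
    (Q : Matrix (Fin (d - m)) (Fin d') ℝ)
    (hrow : ∀ x : Fin d' → ℝ,
      (∃ y : Fin (d - m) → ℝ, Qᵀ *ᵥ y = x) ↔
        ((∃ c : Fin d → ℝ, A *ᵥ c = x) ∧
          ∀ j : Fin m, x ⬝ᵥ (fun i : Fin d' => A i (Fin.castLE hm j)) = 0)) :
    (∀ j : Fin m, (fun i : Fin (d - m) => (Q * A) i (Fin.castLE hm j)) = 0) ∧
    IsUnit (Matrix.of fun r c : Fin (d - m) =>
      (Q * A) r (Fin.cast (Nat.add_sub_cancel' hm) (Fin.natAdd m c))) := by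
  refine ⟨fun j => mulVec_eq_zero_of_forall_transpose_mulVec_dotProduct_eq_zero fun y =>
    ((hrow _).mp ⟨y, rfl⟩).2 j, ?_⟩
  have hτ : Function.Injective fun c => Fin.cast (Nat.add_sub_cancel' hm) (Fin.natAdd m c) :=
    (Fin.cast_injective _).comp (Fin.natAdd_injective _ _)
  have hστ : Disjoint (Set.range (Fin.castLE hm))
      (Set.range fun c => Fin.cast (Nat.add_sub_cancel' hm) (Fin.natAdd m c)) := by
    refine Set.disjoint_range_iff.mpr fun j c h => ?_
    have := congrArg Fin.val h
    simp only [Fin.val_castLE, Fin.val_cast, Fin.val_natAdd] at this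
    omega
  exact isUnit_submatrix_mul_of_linearIndependent hA hτ hστ fun x hx hxσ =>
    (hrow x).mpr ⟨hx, hxσ⟩

/-- If `Q` has orthonormal rows and its row space equals
`col(A) ∩ span{A_{·,1},…,A_{·,m}}ᗮ`, then `Q` annihilates the style columns of `A`
and `[Q A]_{·,F_C}` is invertible. -/
theorem stmt7 (d' d m : ℕ) (hm : m ≤ d)
    (A : Matrix (Fin d') (Fin d) ℝ)
    (hA : LinearIndependent ℝ (fun j : Fin d => fun i : Fin d' => A i j))
    (Q : Matrix (Fin (d - m)) (Fin d') ℝ)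
    (hQ : Q * Qᵀ = 1)
    (hrow : ∀ x : Fin d' → ℝ,
      (∃ y : Fin (d - m) → ℝ, Qᵀ *ᵥ y = x) ↔
        ((∃ c : Fin d → ℝ, A *ᵥ c = x) ∧
          ∀ j : Fin m, x ⬝ᵥ (fun i : Fin d' => A i (Fin.castLE hm j)) = 0)) :
    (∀ j : Fin m, (fun i : Fin (d - m) => (Q * A) i (Fin.castLE hm j)) = 0) ∧
    IsUnit (Matrix.of fun r c : Fin (d - m) =>
      (Q * A) r (Fin.cast (Nat.add_sub_cancel' hm) (Fin.natAdd m c))) :=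
  stmt7_general d' d m hm A hA Q hrow
end

section
/- Fix m ≤ d, a real d' × d matrix A, and a real k × d' matrix-valued decision class. Let μ be a probability measure on ℝ^{d × m} (the space of real d × m matrices) such that μ-almost every matrix Z has rows m+1,…,d equal to zero, and let E = {Z ∈ ℝ^{d×m} : the top m × m block of Z is invertible} satisfy μ(E) > 0; set κ = 1 − μ(E) < 1. Then for every n ≥ 1, under the n-fold product measure μ^{⊗n}, with probability at least 1 − κⁿ the sample (Z₁,…,Zₙ) has the property: for every real k × d' matrix Q, if Q A Zᵢ = 0 for all i = 1,…,n, then Q A_{·,j} = 0 for every j ∈ {1,…,m}. -/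
open Matrix MeasureTheory

/-- **Lemma A.2.** With probability at least `1 - κⁿ` over `n` i.i.d.
draws of style-manipulation matrices `Z` (a.s. zero in content rows, with invertible top
`m × m` block on an event of positive probability), every `Q` with `Q A Zᵢ = 0` for all
`i` annihilates the first `m` columns of `A`. -/
theorem stmt14 (d' d m k : ℕ) (hm : m ≤ d)
    (A : Matrix (Fin d') (Fin d) ℝ)
    (μ : Measure (Fin d → Fin m → ℝ)) [IsProbabilityMeasure μ]
    (hzero : ∀ᵐ Z ∂μ, ∀ i : Fin d, m ≤ (i : ℕ) → ∀ c : Fin m, Z i c = 0)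
    (E : Set (Fin d → Fin m → ℝ))
    (hE : E = {Z | IsUnit (Matrix.of fun r c : Fin m => Z (Fin.castLE hm r) c)})
    (hpos : 0 < μ E)
    (κ : ENNReal) (hκ : κ = 1 - μ E) :
    ∀ n : ℕ, 1 ≤ n →
      1 - κ ^ n ≤ Measure.pi (fun _ : Fin n => μ)
        {Zs : Fin n → Fin d → Fin m → ℝ |
          ∀ Q : Matrix (Fin k) (Fin d') ℝ,
            (∀ i : Fin n, Q * A * Matrix.of (Zs i) = 0) →
            ∀ j : Fin m, (fun i' : Fin k => (Q * A) i' (Fin.castLE hm j)) = 0} := by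
  intro n hn
  set N : Set (Fin d → Fin m → ℝ) :=
    {Z | ∀ i : Fin d, m ≤ (i : ℕ) → ∀ c : Fin m, Z i c = 0} with hN
  set S : Set (Fin d → Fin m → ℝ) := E ∩ N with hS
  -- measurability of E
  have hEmeas : MeasurableSet E := by
    rw [hE]
    have hcont : Continuous fun Z : Fin d → Fin m → ℝ =>
        (Matrix.of fun r c : Fin m => Z (Fin.castLE hm r) c).det := by
      apply Continuous.matrix_det
      exact continuous_pi fun r => continuous_pi fun c =>
        ((continuous_apply c).comp (continuous_apply (Fin.castLE hm r)))
    have heq : {Z : Fin d → Fin m → ℝ |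
        IsUnit (Matrix.of fun r c : Fin m => Z (Fin.castLE hm r) c)}
        = (fun Z : Fin d → Fin m → ℝ =>
            (Matrix.of fun r c : Fin m => Z (Fin.castLE hm r) c).det) ⁻¹' {0}ᶜ := by
      ext Z
      simp [Matrix.isUnit_iff_isUnit_det, isUnit_iff_ne_zero]
    rw [heq]
    exact hcont.measurable (measurableSet_singleton (0:ℝ)).compl
  have hNmeas : MeasurableSet N := by
    have heq : N = ⋂ (i : Fin d) (_ : m ≤ (i:ℕ)) (c : Fin m),
        (fun Z : Fin d → Fin m → ℝ => Z i c) ⁻¹' {0} := by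
      ext Z; simp [hN, Set.mem_iInter]
    rw [heq]
    exact MeasurableSet.iInter fun i => MeasurableSet.iInter fun _ =>
      MeasurableSet.iInter fun c =>
        (((measurable_pi_apply c).comp (measurable_pi_apply i))
          (measurableSet_singleton (0:ℝ)))
  have hSmeas : MeasurableSet S := hEmeas.inter hNmeas
  have hμNc : μ Nᶜ = 0 := hzero
  have hμS : μ S = μ E := by
    refine le_antisymm (measure_mono Set.inter_subset_left) ?_
    calc μ E ≤ μ (S ∪ Nᶜ) := measure_mono (fun Z hZ => by
          by_cases hZN : Z ∈ N
          · exact Or.inl ⟨hZ, hZN⟩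
          · exact Or.inr hZN)
      _ ≤ μ S + μ Nᶜ := measure_union_le _ _
      _ = μ S := by rw [hμNc, add_zero]
  -- key linear algebra fact
  have key : ∀ Z : Fin d → Fin m → ℝ, Z ∈ S →
      ∀ Q : Matrix (Fin k) (Fin d') ℝ, Q * A * Matrix.of Z = 0 →
      ∀ j : Fin m, (fun i' : Fin k => (Q * A) i' (Fin.castLE hm j)) = 0 := by
    intro Z hZ Q hQ j
    obtain ⟨hZE, hZN⟩ := hZ
    rw [hE] at hZE
    set B : Matrix (Fin m) (Fin m) ℝ :=
      Matrix.of fun r c : Fin m => Z (Fin.castLE hm r) c with hB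
    set M : Matrix (Fin k) (Fin m) ℝ :=
      Matrix.of fun i' j' => (Q * A) i' (Fin.castLE hm j') with hM
    have hsum : ∀ g : Fin d → ℝ, (∀ i : Fin d, m ≤ (i:ℕ) → g i = 0) →
        ∑ i : Fin d, g i = ∑ x : Fin m, g (Fin.castLE hm x) := by
      intro g hg
      calc ∑ i : Fin d, g i
          = ∑ i ∈ Finset.univ.map ⟨Fin.castLE hm, Fin.castLE_injective hm⟩, g i := by
            refine (Finset.sum_subset (Finset.subset_univ _) ?_).symm
            intro i _ hi
            refine hg i ?_
            by_contra h
            push_neg at h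
            exact hi (Finset.mem_map.2 ⟨⟨(i:ℕ), h⟩, Finset.mem_univ _, by simp [Fin.ext_iff]⟩)
        _ = ∑ x : Fin m, g (Fin.castLE hm x) := Finset.sum_map _ _ _
    have hMB : M * B = 0 := by
      ext r c
      have h1 : (M * B) r c = ((Q * A) * Matrix.of Z) r c := by
        rw [Matrix.mul_apply, Matrix.mul_apply]
        exact (hsum (fun i => (Q * A) r i * Z i c)
          (fun i hi => by simp only [hZN i hi c, mul_zero])).symm
      rw [h1, hQ, Matrix.zero_apply]
    have hdet : IsUnit B.det := (Matrix.isUnit_iff_isUnit_det B).1 hZE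
    have hM0 : M = 0 := by
      calc M = M * (B * B⁻¹) := by rw [Matrix.mul_nonsing_inv B hdet, Matrix.mul_one]
        _ = (M * B) * B⁻¹ := by rw [Matrix.mul_assoc]
        _ = 0 := by rw [hMB, Matrix.zero_mul]
    ext i'
    have := congrFun (congrFun hM0 i') j
    simpa [hM] using this
  -- set inclusion
  set G : Set (Fin n → Fin d → Fin m → ℝ) := (Set.univ.pi fun _ : Fin n => Sᶜ)ᶜ with hG
  have hsub : G ⊆ {Zs : Fin n → Fin d → Fin m → ℝ |
          ∀ Q : Matrix (Fin k) (Fin d') ℝ,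
            (∀ i : Fin n, Q * A * Matrix.of (Zs i) = 0) →
            ∀ j : Fin m, (fun i' : Fin k => (Q * A) i' (Fin.castLE hm j)) = 0} := by
    intro Zs hZs Q hQ j
    have hex : ∃ i : Fin n, Zs i ∈ S := by
      by_contra h
      push_neg at h
      exact hZs (fun i _ => h i)
    obtain ⟨i, hi⟩ := hex
    exact key (Zs i) hi Q (hQ i) j
  refine le_trans ?_ (measure_mono hsub)
  have hGc : Measure.pi (fun _ : Fin n => μ) Gᶜ = κ ^ n := by
    rw [hG, compl_compl, Measure.pi_pi]
    have hc : μ Sᶜ = κ := by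
      rw [hκ, ← hμS, measure_compl hSmeas (measure_ne_top μ S)]
      simp
    simp [hc]
  rw [tsub_le_iff_right]
  calc (1 : ENNReal) = Measure.pi (fun _ : Fin n => μ) Set.univ := by
        rw [measure_univ]
    _ = Measure.pi (fun _ : Fin n => μ) (G ∪ Gᶜ) := by rw [Set.union_compl_self]
    _ ≤ Measure.pi (fun _ : Fin n => μ) G + Measure.pi (fun _ : Fin n => μ) Gᶜ :=
        measure_union_le _ _
    _ = Measure.pi (fun _ : Fin n => μ) G + κ ^ n := by rw [hGc]
end
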